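/- arXiv:2504.06466 — 4 statements merged into one kernel-verified Lean document; each statement's English description precedes it below -/
import Mathlib

section
/- For n ≥ 1, the number of weakly decreasing Fubini rankings of length n equals 2^(n-1). -/
/-- A Fubini ranking of length `n`: entries in `{1,...,n}` and every value `v`
appearing satisfies `v = 1 + #{j : r_j < v}`. -/
def IsFubini (n : ℕ) (l : List ℕ) : Prop :=
  l.length = n ∧ (∀ x ∈ l, 1 ≤ x ∧ x ≤ n) ∧
    ∀ v ∈ l, v = 1 + l.countP (fun x => decide (x < v))

/-- Split a list (with given head) into maximal runs w.r.t. relation `R`. -/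
def runsAux (R : ℕ → ℕ → Bool) : ℕ → List ℕ → List (List ℕ)
  | a, [] => [[a]]
  | a, b :: l =>
    match runsAux R b l with
    | (c :: r) :: rest =>
        if R a b then (a :: c :: r) :: rest else [a] :: (c :: r) :: rest
    | rs => [a] :: rs

/-- The maximal runs of a list with respect to the relation `R`. -/
def runs (R : ℕ → ℕ → Bool) : List ℕ → List (List ℕ)
  | [] => []
  | a :: l => runsAux R a l

/-- Maximal runs of weak ascents. -/
def weakRuns (l : List ℕ) : List (List ℕ) := runs (fun a b => decide (a ≤ b)) l

/-- Maximal runs of strict ascents. -/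
def strictRuns (l : List ℕ) : List (List ℕ) := runs (fun a b => decide (a < b)) l

/-- Leading terms of a list of runs. -/
def leadingTerms (rs : List (List ℕ)) : List ℕ := rs.map List.headI

/-- Weakly flattened w.r.t. runs of weak ascents. -/
def WeaklyFlattenedWeak (l : List ℕ) : Prop :=
  (leadingTerms (weakRuns l)).Chain' (· ≤ ·)

/-- Flattened w.r.t. runs of weak ascents. -/
def FlattenedWeak (l : List ℕ) : Prop :=
  (leadingTerms (weakRuns l)).Chain' (· < ·)

/-- Weakly flattened w.r.t. runs of strict ascents. -/
def WeaklyFlattenedStrict (l : List ℕ) : Prop :=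
  (leadingTerms (strictRuns l)).Chain' (· ≤ ·)

/-- Flattened w.r.t. runs of strict ascents. -/
def FlattenedStrict (l : List ℕ) : Prop :=
  (leadingTerms (strictRuns l)).Chain' (· < ·)

/-- The content `(c_1, ..., c_n)` of a tuple of length `n`: `c_i` is the number
of entries equal to `i`. -/
def content (l : List ℕ) : List ℕ :=
  (List.range l.length).map (fun i => l.count (i + 1))

/-- The reduced content: multiplicities of the distinct values, in increasing
order of the values. -/
def reducedContent (l : List ℕ) : List ℕ :=
  (l.toFinset.sort (· ≤ ·)).map (fun v => l.count v)

/-- `a_1` copies of `1`, then `a_2` copies of `1 + a_1`, etc. (auxiliary). -/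
def stairsAux : ℕ → List ℕ → List ℕ
  | _, [] => []
  | s, c :: rest => List.replicate c (s + 1) ++ stairsAux (s + c) rest

/-- The weakly increasing tuple with reduced content `a`. -/
def stairs (a : List ℕ) : List ℕ := stairsAux 0 a

/-!
Deleting the first (largest) entry of a weakly decreasing Fubini ranking of length `n + 1`
leaves one of length `n`. Conversely, an entry `x` at least as large as all entries of such a
ranking `l` satisfies the Fubini condition exactly when it already occurs in `l` or equals
`l.length + 1`, since `x` is never counted among the entries below a value of `l`. So for
`n ≥ 1` each ranking of length `n` extends in exactly two ways, by repeating its first entry or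
by prepending `n + 1`, and the count doubles at each step starting from `[1]`.
-/

def weaklyDecreasingFubini (n : ℕ) : Set (List ℕ) :=
  {l | IsFubini n l ∧ l.IsChain (· ≥ ·)}

theorem isFubini_iff {n : ℕ} {l : List ℕ} :
    IsFubini n l ↔ l.length = n ∧ ∀ v ∈ l, v = 1 + l.countP (· < v) := by
  refine ⟨fun h => ⟨h.1, h.2.2⟩, fun ⟨hlen, h⟩ => ⟨hlen, fun v hv => ?_, h⟩⟩
  have hlt : l.countP (· < v) < l.length :=
    List.countP_le_length.lt_of_ne fun heq => by simpa using List.countP_eq_length.1 heq v hv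
  have := h v hv
  omega

theorem countP_cons_lt_of_le {x v : ℕ} (l : List ℕ) (h : v ≤ x) :
    (x :: l).countP (· < v) = l.countP (· < v) := by
  simp [h.not_gt]

theorem fubini_cons_iff {x : ℕ} {l : List ℕ} (hx : ∀ v ∈ l, v ≤ x) :
    (∀ v ∈ x :: l, v = 1 + (x :: l).countP (· < v)) ↔
      (∀ v ∈ l, v = 1 + l.countP (· < v)) ∧ (x ∈ l ∨ x = l.length + 1) := by
  rw [List.forall_mem_cons, countP_cons_lt_of_le l le_rfl,
    forall₂_congr fun v hv => by rw [countP_cons_lt_of_le l (hx v hv)]]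
  by_cases hxl : x ∈ l
  · exact ⟨fun h => ⟨h.2, .inl hxl⟩, fun h => ⟨h.1 x hxl, h.1⟩⟩
  · have hall : l.countP (· < x) = l.length :=
      List.countP_eq_length.2 fun v hv => by
        simpa using (hx v hv).lt_of_ne fun h => hxl (h ▸ hv)
    rw [hall, Nat.add_comm 1, and_comm]
    simp only [hxl, false_or]

theorem cons_mem_weaklyDecreasingFubini_iff {n x : ℕ} {l : List ℕ} :
    x :: l ∈ weaklyDecreasingFubini (n + 1) ↔
      l ∈ weaklyDecreasingFubini n ∧ (∀ v ∈ l, v ≤ x) ∧ (x ∈ l ∨ x = n + 1) := by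
  simp only [weaklyDecreasingFubini, Set.mem_ofPred_eq, isFubini_iff, List.isChain_iff_pairwise,
    List.pairwise_cons, List.length_cons, Nat.add_right_cancel_iff]
  constructor
  · rintro ⟨⟨rfl, hP⟩, hx, hl⟩
    exact ⟨⟨⟨rfl, ((fubini_cons_iff hx).1 hP).1⟩, hl⟩, hx, ((fubini_cons_iff hx).1 hP).2⟩
  · rintro ⟨⟨⟨rfl, hP⟩, hl⟩, hx, hxl⟩
    exact ⟨⟨rfl, (fubini_cons_iff hx).2 ⟨hP, hxl⟩⟩, hx, hl⟩

theorem weaklyDecreasingFubini_zero : weaklyDecreasingFubini 0 = {[]} := by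
  ext l
  simp only [weaklyDecreasingFubini, Set.mem_ofPred_eq, isFubini_iff, List.length_eq_zero_iff,
    Set.mem_singleton_iff]
  constructor
  · exact fun h => h.1.1
  · rintro rfl
    simp

theorem weaklyDecreasingFubini_one : weaklyDecreasingFubini 1 = {[1]} := by
  ext l
  rcases l with _ | ⟨x, l⟩
  · simp [weaklyDecreasingFubini, IsFubini]
  · simp only [cons_mem_weaklyDecreasingFubini_iff, weaklyDecreasingFubini_zero,
      Set.mem_singleton_iff, List.cons.injEq]
    constructor
    · rintro ⟨rfl, -, hx⟩
      simpa using hx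
    · rintro ⟨rfl, rfl⟩
      simp

theorem forall_le_and_mem_cons_iff {α : Type*} [PartialOrder α] {x a : α} {l : List α}
    (hl : ∀ v ∈ l, v ≤ a) : ((∀ v ∈ a :: l, v ≤ x) ∧ x ∈ a :: l) ↔ x = a := by
  constructor
  · rintro ⟨hx, hxl⟩
    refine le_antisymm ?_ (hx a List.mem_cons_self)
    rcases List.mem_cons.1 hxl with rfl | hxl
    exacts [le_rfl, hl x hxl]
  · rintro rfl
    exact ⟨List.forall_mem_cons.2 ⟨le_rfl, hl⟩, List.mem_cons_self⟩

theorem weaklyDecreasingFubini_succ {n : ℕ} (hn : n ≠ 0) :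
    weaklyDecreasingFubini (n + 1) =
      (fun l => l.headI :: l) '' weaklyDecreasingFubini n ∪
        List.cons (n + 1) '' weaklyDecreasingFubini n := by
  have head_iff : ∀ {x : ℕ}, ∀ l ∈ weaklyDecreasingFubini n,
      ((∀ v ∈ l, v ≤ x) ∧ x ∈ l ↔ l.headI = x) := by
    intro x l hl
    obtain ⟨a, t, rfl⟩ := List.exists_cons_of_ne_nil (l := l) (by
      rintro rfl
      exact hn hl.1.1.symm)
    have ht := (List.pairwise_cons.1 (List.isChain_iff_pairwise.1 hl.2)).1
    rw [List.headI_cons, eq_comm]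
    exact forall_le_and_mem_cons_iff ht
  ext l'
  rcases l' with _ | ⟨x, l⟩
  · simp [weaklyDecreasingFubini, IsFubini]
  simp only [cons_mem_weaklyDecreasingFubini_iff, Set.mem_union, Set.mem_image, List.cons.injEq,
    exists_eq_right_right]
  constructor
  · rintro ⟨hl, hx, hxl | rfl⟩
    · exact .inl ⟨hl, (head_iff l hl).1 ⟨hx, hxl⟩⟩
    · exact .inr ⟨hl, rfl⟩
  · rintro (⟨hl, hx⟩ | ⟨hl, rfl⟩)
    · obtain ⟨hx, hxl⟩ := (head_iff l hl).2 hx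
      exact ⟨hl, hx, .inl hxl⟩
    · exact ⟨hl, fun v hv => (hl.1.2.1 v hv).2.trans n.le_succ, .inr rfl⟩

theorem headI_le_of_mem_weaklyDecreasingFubini {n : ℕ} {l : List ℕ}
    (hl : l ∈ weaklyDecreasingFubini n) : l.headI ≤ n := by
  rcases l with _ | ⟨a, l⟩
  · exact n.zero_le
  · exact (hl.1.2.1 a List.mem_cons_self).2

theorem encard_weaklyDecreasingFubini_succ (n : ℕ) :
    (weaklyDecreasingFubini (n + 1)).encard = 2 ^ n := by
  induction n with
  | zero => rw [weaklyDecreasingFubini_one, Set.encard_singleton, pow_zero]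
  | succ n ih =>
    have cons_headI_injective : (fun l : List ℕ => l.headI :: l).Injective :=
      fun _ _ h => (List.cons.inj h).2
    have disjoint : Disjoint ((fun l => l.headI :: l) '' weaklyDecreasingFubini (n + 1))
        (List.cons (n + 2) '' weaklyDecreasingFubini (n + 1)) := by
      rw [Set.disjoint_left]
      rintro _ ⟨l, hl, rfl⟩ ⟨l', -, h⟩
      have := headI_le_of_mem_weaklyDecreasingFubini hl
      have := (List.cons.inj h).1
      omega
    rw [weaklyDecreasingFubini_succ n.succ_ne_zero, Set.encard_union_eq disjoint,
      cons_headI_injective.encard_image, List.cons_injective.encard_image, ih, pow_succ, mul_two]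

theorem weakly_decreasing_fubini_count (n : ℕ) (hn : 1 ≤ n) :
    {l : List ℕ | IsFubini n l ∧ l.Chain' (· ≥ ·)}.ncard = 2 ^ (n - 1) := by
  obtain ⟨m, rfl⟩ := Nat.exists_eq_add_of_le' hn
  change (weaklyDecreasingFubini (m + 1)).ncard = _
  rw [Set.ncard_def, encard_weaklyDecreasingFubini_succ, Nat.add_sub_cancel]
  simp
end

section
/- For every composition a = (a_1,...,a_k) of n with all parts positive, there exists a weakly flattened Fubini ranking of length n with runs of weak ascents whose reduced content is a; in fact any weakly increasing Fubini ranking has a single run of weak ascents and is weakly flattened. -/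
/-! The witness is `stairs a`, which repeats the value `1 + a₁ + ⋯ + aᵢ₋₁` exactly `aᵢ` times.
Each of these values exceeds by one the number of entries below it, so `stairs a` is a Fubini
ranking with reduced content `a`. Like every nonempty weakly increasing tuple, it is a single run
of weak ascents, and a single leading term is trivially weakly increasing. -/

section Runs

variable (R : ℕ → ℕ → Bool)

theorem runsAux_of_isChain :
    ∀ (a : ℕ) (l : List ℕ), (a :: l).IsChain (fun x y => R x y) → runsAux R a l = [a :: l]
  | _, [], _ => rfl
  | a, b :: l, h => by
    rw [List.isChain_cons_cons] at h
    simp only [runsAux, runsAux_of_isChain b l h.2, h.1, if_true]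

theorem runs_of_isChain {l : List ℕ} (hne : l ≠ []) (h : l.IsChain (fun x y => R x y)) :
    runs R l = [l] := by
  cases l with
  | nil => exact absurd rfl hne
  | cons a l => exact runsAux_of_isChain R a l h

end Runs

theorem weakRuns_of_isChain {l : List ℕ} (hne : l ≠ []) (h : l.IsChain (· ≤ ·)) :
    weakRuns l = [l] :=
  runs_of_isChain _ hne (by simpa using h)

theorem weaklyFlattenedWeak_of_isChain {l : List ℕ} (hne : l ≠ []) (h : l.IsChain (· ≤ ·)) :
    WeaklyFlattenedWeak l := by
  rw [WeaklyFlattenedWeak, weakRuns_of_isChain hne h]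
  exact List.isChain_singleton _

theorem IsFubini.ne_nil {n : ℕ} {l : List ℕ} (hn : 1 ≤ n) (hl : IsFubini n l) : l ≠ [] := by
  rintro rfl
  have : 0 = n := hl.1
  omega

theorem List.toFinset_sort_eq_dedup {α : Type*} [LinearOrder α] {l : List α}
    (hl : l.Pairwise (· ≤ ·)) :
    l.toFinset.sort (· ≤ ·) = l.dedup := by
  have hdedup : l.dedup.toFinset = l.toFinset := by ext; simp
  rw [← hdedup, List.toFinset_sort _ (List.nodup_dedup l)]
  exact hl.sublist (List.dedup_sublist l)

section Stairs

variable (s : ℕ) (a : List ℕ)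

theorem length_stairsAux : (stairsAux s a).length = a.sum := by
  induction a generalizing s with
  | nil => rfl
  | cons c rest ih => simp [stairsAux, ih]

variable {s a}

theorem lt_of_mem_stairsAux {x : ℕ} (hx : x ∈ stairsAux s a) : s < x := by
  induction a generalizing s with
  | nil => simp [stairsAux] at hx
  | cons c rest ih =>
    rcases List.mem_append.1 hx with h | h
    · rw [(List.mem_replicate.1 h).2]
      exact s.lt_succ_self
    · have := ih h
      omega

theorem le_of_mem_stairsAux {x : ℕ} (hx : x ∈ stairsAux s a) : x ≤ s + a.sum := by
  induction a generalizing s with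
  | nil => simp [stairsAux] at hx
  | cons c rest ih =>
    rw [List.sum_cons]
    rcases List.mem_append.1 hx with h | h
    · obtain ⟨hc, rfl⟩ := List.mem_replicate.1 h
      omega
    · have := ih h
      omega

theorem eq_add_countP_lt_of_mem_stairsAux {v : ℕ} (hv : v ∈ stairsAux s a) :
    v = s + 1 + (stairsAux s a).countP (· < v) := by
  induction a generalizing s with
  | nil => simp [stairsAux] at hv
  | cons c rest ih =>
    rw [stairsAux, List.countP_append]
    rcases List.mem_append.1 hv with h | h
    · obtain ⟨-, rfl⟩ := List.mem_replicate.1 h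
      have hrep : (List.replicate c (s + 1)).countP (· < s + 1) = 0 :=
        List.countP_eq_zero.2 fun x hx => by simp [(List.mem_replicate.1 hx).2]
      have hrest : (stairsAux (s + c) rest).countP (· < s + 1) = 0 :=
        List.countP_eq_zero.2 fun x hx => by
          have := lt_of_mem_stairsAux hx
          simp only [decide_eq_true_eq]
          omega
      rw [hrep, hrest]
    · have hlt := lt_of_mem_stairsAux h
      have hrep : (List.replicate c (s + 1)).countP (· < v) = c := by
        rw [List.countP_eq_length.2 fun x hx => ?_, List.length_replicate]
        obtain ⟨hc, rfl⟩ := List.mem_replicate.1 hx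
        simp only [decide_eq_true_eq]
        omega
      have := ih h
      omega

variable (s a)

theorem pairwise_stairsAux : (stairsAux s a).Pairwise (· ≤ ·) := by
  induction a generalizing s with
  | nil => exact List.Pairwise.nil
  | cons c rest ih =>
    refine List.pairwise_append.2 ⟨List.pairwise_replicate.2 (Or.inr le_rfl), ih _, ?_⟩
    intro x hx y hy
    obtain ⟨hc, rfl⟩ := List.mem_replicate.1 hx
    have := lt_of_mem_stairsAux hy
    omega

theorem map_count_dedup_stairsAux (ha : ∀ x ∈ a, 0 < x) :
    (stairsAux s a).dedup.map (stairsAux s a).count = a := by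
  induction a generalizing s with
  | nil => rfl
  | cons c rest ih =>
    have hc : c ≠ 0 := (ha c List.mem_cons_self).ne'
    have hfresh : s + 1 ∉ stairsAux (s + c) rest := fun h =>
      (lt_of_mem_stairsAux h).not_ge (by omega)
    have hdisj : (List.replicate c (s + 1)).Disjoint (stairsAux (s + c) rest) := by
      intro x hx
      rwa [(List.mem_replicate.1 hx).2]
    rw [stairsAux, hdisj.dedup_append, List.replicate_dedup hc, List.singleton_append,
      List.map_cons, List.count_append, List.count_replicate_self, List.count_eq_zero.2 hfresh]
    congr 1
    refine (List.map_congr_left fun v hv => ?_).trans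
      (ih (s + c) fun x hx => ha x (List.mem_cons_of_mem c hx))
    have hv := lt_of_mem_stairsAux (List.mem_dedup.1 hv)
    have hnot : v ∉ List.replicate c (s + 1) := fun h => by
      have := (List.mem_replicate.1 h).2
      omega
    rw [List.count_append, List.count_eq_zero.2 hnot, zero_add]

end Stairs

theorem isFubini_stairs {n : ℕ} {a : List ℕ} (hsum : a.sum = n) : IsFubini n (stairs a) := by
  refine ⟨(length_stairsAux 0 a).trans hsum, fun x hx => ?_, fun v hv => ?_⟩
  · have hlo := lt_of_mem_stairsAux hx
    have hhi := le_of_mem_stairsAux hx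
    omega
  · simpa [stairs] using eq_add_countP_lt_of_mem_stairsAux hv

theorem isChain_stairs (a : List ℕ) : (stairs a).IsChain (· ≤ ·) :=
  List.isChain_iff_pairwise.2 (pairwise_stairsAux 0 a)

theorem reducedContent_stairs {a : List ℕ} (ha : ∀ x ∈ a, 0 < x) :
    reducedContent (stairs a) = a := by
  rw [reducedContent, stairs, List.toFinset_sort_eq_dedup (pairwise_stairsAux 0 a)]
  exact map_count_dedup_stairsAux 0 a ha

theorem exists_wflat_wruns_reducedContent (n : ℕ) (hn : 1 ≤ n) (a : List ℕ)
    (ha : ∀ x ∈ a, 0 < x) (hsum : a.sum = n) :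
    (∃ l : List ℕ, IsFubini n l ∧ reducedContent l = a ∧
      WeaklyFlattenedWeak l ∧ (weakRuns l).length = 1) ∧
    ∀ l : List ℕ, IsFubini n l → l.Chain' (· ≤ ·) →
      WeaklyFlattenedWeak l ∧ (weakRuns l).length = 1 := by
  have single_run : ∀ l : List ℕ, IsFubini n l → l.IsChain (· ≤ ·) →
      WeaklyFlattenedWeak l ∧ (weakRuns l).length = 1 := fun l hl hc =>
    ⟨weaklyFlattenedWeak_of_isChain (hl.ne_nil hn) hc, by
      rw [weakRuns_of_isChain (hl.ne_nil hn) hc, List.length_singleton]⟩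
  exact ⟨⟨stairs a, isFubini_stairs hsum, reducedContent_stairs ha,
    single_run _ (isFubini_stairs hsum) (isChain_stairs a)⟩, single_run⟩
end

section
/- For n ≥ 1 and k ≥ 1, there exists a weakly flattened Fubini ranking of length n with exactly k runs of weak ascents if and only if k ≤ ⌈n/2⌉. -/
/-!
Consecutive runs of weak ascents are separated by a descent. If a run other than the last one
were a singleton `[x]`, the next run would start below `x`, against weak flatness; so all runs
but the last have length at least two, and `n ≥ 2k - 1`.

Conversely, for `t = n - 2j ≥ 1` the tuple `1, …, 1, t+2, t+1, t+4, t+3, …, t+2j, t+2j-1`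
(with `t` ones) is a Fubini ranking whose `j + 1` runs `[1, …, 1, t+2], [t+1, t+4], …, [t+2j-1]`
have the increasing leading terms `1, t+1, t+3, …, t+2j-1`.
-/

section RunsAux

variable (R : ℕ → ℕ → Bool)

theorem runsAux_eq_cons (a : ℕ) (l : List ℕ) :
    ∃ r rest, runsAux R a l = (a :: r) :: rest := by
  induction l generalizing a with
  | nil => exact ⟨[], [], rfl⟩
  | cons b l ih =>
    obtain ⟨r, rest, h⟩ := ih b
    by_cases hab : R a b
    · exact ⟨b :: r, rest, by simp [runsAux, h, hab]⟩
    · exact ⟨[], (b :: r) :: rest, by simp [runsAux, h, hab]⟩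

theorem leadingTerms_runsAux_eq_cons (a : ℕ) (l : List ℕ) :
    ∃ L, leadingTerms (runsAux R a l) = a :: L := by
  obtain ⟨r, rest, hs⟩ := runsAux_eq_cons R a l
  exact ⟨_, by rw [hs]; rfl⟩

variable {R}

theorem runsAux_cons_of_pos {a b : ℕ} (l : List ℕ) (h : R a b = true) :
    runsAux R a (b :: l) = (a :: (runsAux R b l).headI) :: (runsAux R b l).tail := by
  obtain ⟨r, rest, hs⟩ := runsAux_eq_cons R b l
  simp [runsAux, hs, h]

theorem runsAux_cons_of_neg {a b : ℕ} (l : List ℕ) (h : R a b = false) :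
    runsAux R a (b :: l) = [a] :: runsAux R b l := by
  obtain ⟨r, rest, hs⟩ := runsAux_eq_cons R b l
  simp [runsAux, hs, h]

theorem flatten_runsAux (a : ℕ) (l : List ℕ) : (runsAux R a l).flatten = a :: l := by
  induction l generalizing a with
  | nil => rfl
  | cons b l ih =>
    cases hab : R a b
    · simp [runsAux_cons_of_neg l hab, ih b]
    · obtain ⟨r, rest, hs⟩ := runsAux_eq_cons R b l
      have ihb := ih b
      rw [hs] at ihb
      simpa [runsAux_cons_of_pos l hab, hs] using ihb

theorem ne_nil_of_mem_runsAux {a : ℕ} {l : List ℕ} {r : List ℕ} (hr : r ∈ runsAux R a l) :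
    r ≠ [] := by
  induction l generalizing a with
  | nil => simp_all [runsAux]
  | cons b l ih =>
    cases hab : R a b
    · rw [runsAux_cons_of_neg l hab, List.mem_cons] at hr
      rcases hr with rfl | hr
      · simp
      · exact ih hr
    · rw [runsAux_cons_of_pos l hab, List.mem_cons] at hr
      rcases hr with rfl | hr
      · simp
      · exact ih (List.mem_of_mem_tail hr)

theorem isChain_runsAux (a : ℕ) (l : List ℕ) :
    (runsAux R a l).IsChain (fun r r' => R r.getLastI r'.headI = false) := by
  induction l generalizing a with
  | nil => simp [runsAux]
  | cons b l ih =>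
    obtain ⟨r, rest, hs⟩ := runsAux_eq_cons R b l
    have ihb := ih b
    rw [hs] at ihb
    cases hab : R a b
    · rw [runsAux_cons_of_neg l hab, hs]
      exact List.isChain_cons_cons.mpr ⟨by simpa [List.getLastI] using hab, ihb⟩
    · rw [runsAux_cons_of_pos l hab, hs]
      rcases rest with _ | ⟨r', rest⟩
      · simp
      · simp only [List.headI_cons, List.tail_cons]
        rw [List.isChain_cons_cons] at ihb ⊢
        -- the last entry of `a :: b :: r` is that of `b :: r`
        exact ⟨by simpa [List.getLastI_eq_getLast?_getD] using ihb.1, ihb.2⟩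

theorem leadingTerms_runsAux_cons_of_pos {a b : ℕ} (l : List ℕ) (h : R a b = true) :
    leadingTerms (runsAux R a (b :: l)) = a :: (leadingTerms (runsAux R b l)).tail := by
  simp [runsAux_cons_of_pos l h, leadingTerms, List.map_tail]

theorem leadingTerms_runsAux_cons_of_neg {a b : ℕ} (l : List ℕ) (h : R a b = false) :
    leadingTerms (runsAux R a (b :: l)) = a :: leadingTerms (runsAux R b l) := by
  simp [runsAux_cons_of_neg l h, leadingTerms]

theorem leadingTerms_runsAux_replicate_append {a : ℕ} (h : R a a = true) (m : ℕ)
    (l : List ℕ) :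
    leadingTerms (runsAux R a (List.replicate m a ++ l)) = leadingTerms (runsAux R a l) := by
  induction m with
  | zero => rfl
  | succ m ih =>
    obtain ⟨L, hL⟩ := leadingTerms_runsAux_eq_cons R a l
    rw [List.replicate_succ, List.cons_append, leadingTerms_runsAux_cons_of_pos _ h, ih, hL,
      List.tail_cons]

end RunsAux

theorem two_le_length_of_headI_le_of_lt_getLastI {α : Type*} [LinearOrder α] [Inhabited α]
    {r : List α} {x : α} (hr : r ≠ []) (hhead : r.headI ≤ x) (hlast : x < r.getLastI) :
    2 ≤ r.length := by
  rcases r with _ | ⟨y, _ | ⟨z, r⟩⟩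
  · exact absurd rfl hr
  · exact absurd hlast (by simpa [List.getLastI] using hhead)
  · simp

theorem two_mul_length_le_sum_length_add_one {α : Type*} [LinearOrder α] [Inhabited α] :
    ∀ rs : List (List α), (∀ r ∈ rs, r ≠ []) →
      rs.IsChain (fun r r' => r'.headI < r.getLastI) → (rs.map List.headI).IsChain (· ≤ ·) →
      2 * rs.length ≤ (rs.map List.length).sum + 1
  | [], _, _, _ => by simp
  | [r], hne, _, _ => by
    have : 1 ≤ r.length := List.length_pos_iff.mpr (hne r (by simp))
    simp only [List.length_singleton, List.map_cons, List.map_nil, List.sum_singleton]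
    omega
  | r :: r' :: rest, hne, hdesc, hheads => by
    rw [List.isChain_cons_cons] at hdesc
    rw [List.map_cons, List.map_cons, List.isChain_cons_cons] at hheads
    have hr : 2 ≤ r.length :=
      two_le_length_of_headI_le_of_lt_getLastI (hne r (by simp)) hheads.1 hdesc.1
    have ih := two_mul_length_le_sum_length_add_one (r' :: rest)
      (fun s hs => hne s (List.mem_cons_of_mem _ hs)) hdesc.2 hheads.2
    simp only [List.map_cons, List.sum_cons, List.length_cons] at ih ⊢
    omega

theorem WeaklyFlattenedWeak.two_mul_length_weakRuns_le {l : List ℕ}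
    (h : WeaklyFlattenedWeak l) : 2 * (weakRuns l).length ≤ l.length + 1 := by
  rcases l with _ | ⟨a, l⟩
  · simp [weakRuns, runs]
  have hdesc : (weakRuns (a :: l)).IsChain (fun r r' => r'.headI < r.getLastI) :=
    (isChain_runsAux a l).imp fun r r' h => by simpa using h
  have hsum := two_mul_length_le_sum_length_add_one (weakRuns (a :: l))
    (fun _ => ne_nil_of_mem_runsAux) hdesc h
  rwa [← List.length_flatten, weakRuns, runs, flatten_runsAux] at hsum

def swappedRange : ℕ → ℕ → List ℕ
  | _, 0 => []
  | s, j + 1 => (s + 2) :: (s + 1) :: swappedRange (s + 2) j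

theorem length_swappedRange (s j : ℕ) : (swappedRange s j).length = 2 * j := by
  induction j generalizing s with
  | zero => rfl
  | succ j ih => simp only [swappedRange, List.length_cons, ih]; ring

theorem bounds_of_mem_swappedRange {s j x : ℕ} (hx : x ∈ swappedRange s j) :
    s < x ∧ x ≤ s + 2 * j := by
  induction j generalizing s with
  | zero => simp [swappedRange] at hx
  | succ j ih =>
    simp only [swappedRange, List.mem_cons] at hx
    rcases hx with rfl | rfl | hx
    · omega
    · omega
    · have := ih hx; omega

theorem add_countP_lt_swappedRange {s j v : ℕ} (hsv : s < v) (hv : v ≤ s + 2 * j) :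
    s + 1 + (swappedRange s j).countP (· < v) = v := by
  induction j generalizing s with
  | zero => omega
  | succ j ih =>
    simp only [swappedRange, List.countP_cons, decide_eq_true_eq]
    by_cases hv3 : s + 3 ≤ v
    · have := ih (s := s + 2) (by omega) (by omega)
      rw [if_pos (by omega), if_pos (by omega)]
      omega
    · have h0 : (swappedRange (s + 2) j).countP (· < v) = 0 := by
        rw [List.countP_eq_zero]
        intro x hx
        have := bounds_of_mem_swappedRange hx
        simp only [decide_eq_true_eq]
        omega
      rw [h0]
      split_ifs <;> omega

theorem leadingTerms_runsAux_swappedRange (j : ℕ) {s a : ℕ} (ha : a ≤ s + 2) :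
    leadingTerms (runsAux (fun x y => decide (x ≤ y)) a (swappedRange s j)) =
      a :: List.range' (s + 1) j 2 := by
  induction j generalizing s a with
  | zero => rfl
  | succ j ih =>
    rw [swappedRange, leadingTerms_runsAux_cons_of_pos _ (by simpa using ha),
      leadingTerms_runsAux_cons_of_neg _ (by simp), ih (by omega)]
    rfl

theorem isFubini_replicate_append_swappedRange (m j : ℕ) :
    IsFubini (m + 1 + 2 * j) (List.replicate (m + 1) 1 ++ swappedRange (m + 1) j) := by
  have hbounds : ∀ x ∈ List.replicate (m + 1) 1 ++ swappedRange (m + 1) j,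
      1 ≤ x ∧ x ≤ m + 1 + 2 * j := by
    intro x hx
    rcases List.mem_append.mp hx with hx | hx
    · rw [List.eq_of_mem_replicate hx]; omega
    · have := bounds_of_mem_swappedRange hx; omega
  refine ⟨by simp [length_swappedRange], hbounds, fun v hv => ?_⟩
  rcases List.mem_append.mp hv with hv1 | hvs
  · rw [List.eq_of_mem_replicate hv1, eq_comm, add_eq_left, List.countP_eq_zero]
    intro x hx
    have := (hbounds x hx).1
    simp only [decide_eq_true_eq]
    omega
  · obtain ⟨hlo, hhi⟩ := bounds_of_mem_swappedRange hvs
    rw [List.countP_append, List.countP_replicate, if_pos (by simp; omega)]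
    have := add_countP_lt_swappedRange hlo hhi
    omega

theorem leadingTerms_weakRuns_replicate_append_swappedRange (m j : ℕ) :
    leadingTerms (weakRuns (List.replicate (m + 1) 1 ++ swappedRange (m + 1) j)) =
      1 :: List.range' (m + 2) j 2 := by
  rw [List.replicate_succ, List.cons_append, weakRuns, runs,
    leadingTerms_runsAux_replicate_append (by simp),
    leadingTerms_runsAux_swappedRange j (by omega)]

theorem wflat_wruns_exists_iff_general (n k : ℕ) (hk : 1 ≤ k) :
    (∃ l : List ℕ, IsFubini n l ∧ WeaklyFlattenedWeak l ∧
      (weakRuns l).length = k) ↔ k ≤ (n + 1) / 2 := by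
  constructor
  · rintro ⟨l, ⟨hlen, -⟩, hflat, rfl⟩
    have := hflat.two_mul_length_weakRuns_le
    omega
  · intro hkn
    obtain ⟨j, rfl⟩ : ∃ j, k = j + 1 := ⟨k - 1, by omega⟩
    obtain ⟨m, rfl⟩ : ∃ m, n = m + 1 + 2 * j := ⟨n - 1 - 2 * j, by omega⟩
    have hheads := leadingTerms_weakRuns_replicate_append_swappedRange m j
    refine ⟨_, isFubini_replicate_append_swappedRange m j, ?_, ?_⟩
    · rw [WeaklyFlattenedWeak, hheads]
      refine List.isChain_cons.mpr ⟨fun y hy => ?_, ?_⟩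
      · obtain ⟨i, -, rfl⟩ := List.mem_range'.mp (List.mem_of_mem_head? hy)
        omega
      · exact (List.isChain_range' _ _ _).imp fun a b h => by omega
    · rw [← List.length_map, ← leadingTerms, hheads]
      simp

theorem wflat_wruns_exists_iff (n k : ℕ) (hn : 1 ≤ n) (hk : 1 ≤ k) :
    (∃ l : List ℕ, IsFubini n l ∧ WeaklyFlattenedWeak l ∧
      (weakRuns l).length = k) ↔ k ≤ (n + 1) / 2 :=
  wflat_wruns_exists_iff_general n k hk
end

section
/- Suppose a flattened Fubini ranking with runs of weak ascents has reduced content with m parts (i.e., m distinct values appear) and has k runs of weak ascents. Then k < max(m, 2). -/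
section Runs

variable (R : ℕ → ℕ → Bool)

theorem exists_runsAux_eq_cons (a : ℕ) (l : List ℕ) :
    ∃ t rest, runsAux R a l = (a :: t) :: rest := by
  induction l generalizing a with
  | nil => exact ⟨[], [], rfl⟩
  | cons b l ih =>
    obtain ⟨t, rest, h⟩ := ih b
    by_cases hab : R a b
    · exact ⟨b :: t, rest, by simp [runsAux, h, hab]⟩
    · exact ⟨[], (b :: t) :: rest, by simp [runsAux, h, hab]⟩

theorem runsAux_cons_of_eq {a b : ℕ} {l t : List ℕ} {rest : List (List ℕ)}
    (h : runsAux R b l = (b :: t) :: rest) :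
    runsAux R a (b :: l) =
      if R a b then (a :: b :: t) :: rest else [a] :: (b :: t) :: rest := by
  simp [runsAux, h]

theorem leadingTerms_runsAux_sublist (a : ℕ) (l : List ℕ) :
    (leadingTerms (runsAux R a l)).Sublist (a :: l) := by
  induction l generalizing a with
  | nil => simp [runsAux, leadingTerms]
  | cons b l ih =>
    obtain ⟨t, rest, h⟩ := exists_runsAux_eq_cons R b l
    have hrest : (leadingTerms rest).Sublist l := by
      simpa [h, leadingTerms] using ih b
    rw [runsAux_cons_of_eq R h]
    split_ifs
    · simpa [leadingTerms] using hrest.cons b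
    · simpa [leadingTerms] using hrest

theorem leadingTerms_runs_sublist (l : List ℕ) : (leadingTerms (runs R l)).Sublist l := by
  cases l with
  | nil => simp [runs, leadingTerms]
  | cons a l => exact leadingTerms_runsAux_sublist R a l

theorem exists_not_rel_getLast_leadingTerms_runsAux (a : ℕ) (l : List ℕ)
    (hlen : 2 ≤ (runsAux R a l).length) :
    ∃ x ∈ a :: l, ∃ y ∈ (leadingTerms (runsAux R a l)).getLast?, R x y = false := by
  induction l generalizing a with
  | nil => simp [runsAux] at hlen
  | cons b l ih =>
    obtain ⟨t, rest, h⟩ := exists_runsAux_eq_cons R b l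
    rw [runsAux_cons_of_eq R h] at hlen ⊢
    cases rest with
    | nil =>
      by_cases hab : R a b
      · simp [hab] at hlen
      · exact ⟨a, by simp, b, by simp [hab, leadingTerms], by simpa using hab⟩
    | cons r₀ rest =>
      obtain ⟨x, hx, y, hy, hxy⟩ := ih b (by simp [h])
      refine ⟨x, List.mem_cons_of_mem a hx, y, ?_, hxy⟩
      split_ifs <;> simpa [h, leadingTerms] using hy

theorem exists_not_rel_getLast_leadingTerms_runs (l : List ℕ) (hlen : 2 ≤ (runs R l).length) :
    ∃ x ∈ l, ∃ y ∈ (leadingTerms (runs R l)).getLast?, R x y = false := by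
  cases l with
  | nil => simp [runs] at hlen
  | cons a l => exact exists_not_rel_getLast_leadingTerms_runsAux R a l hlen

end Runs

theorem length_reducedContent (l : List ℕ) : (reducedContent l).length = l.toFinset.card := by
  simp [reducedContent]

theorem List.Nodup.length_le_card_toFinset {α : Type*} [DecidableEq α] {s l : List α}
    (hs : s.Nodup) (hsub : s ⊆ l) : s.length ≤ l.toFinset.card := by
  rw [List.card_toFinset]
  exact (hs.subperm fun _ hx => List.mem_dedup.2 (hsub hx)).length_le

theorem flat_wruns_length_lt_general (l : List ℕ) (hfl : FlattenedWeak l) :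
    (weakRuns l).length < max (reducedContent l).length 2 := by
  rcases lt_or_ge (weakRuns l).length 2 with hk | hk
  · exact lt_max_of_lt_right hk
  -- The last leading term `y` is the largest one and the entry `x` just before it exceeds it,
  -- so the leading terms together with `x` are distinct entries of `l`.
  set H := leadingTerms (weakRuns l)
  obtain ⟨x, hx, y, hy, hxy⟩ : ∃ x ∈ l, ∃ y ∈ H.getLast?, decide (x ≤ y) = false :=
    exists_not_rel_getLast_leadingTerms_runs _ l hk
  have hchain : (H ++ [x]).IsChain (· < ·) :=
    List.isChain_append.2 ⟨hfl, List.isChain_singleton x, by simp_all⟩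
  have hsub : H ++ [x] ⊆ l :=
    List.append_subset.2 ⟨(leadingTerms_runs_sublist _ l).subset, by simpa using hx⟩
  calc (weakRuns l).length < (H ++ [x]).length := by simp [H, leadingTerms]
    _ ≤ l.toFinset.card := List.Nodup.length_le_card_toFinset (hchain.pairwise.imp ne_of_lt) hsub
    _ = (reducedContent l).length := (length_reducedContent l).symm
    _ ≤ _ := le_max_left _ _

theorem flat_wruns_length_lt (n : ℕ) (l : List ℕ) (hf : IsFubini n l)
    (hfl : FlattenedWeak l) :
    (weakRuns l).length < max (reducedContent l).length 2 :=
  flat_wruns_length_lt_general l hfl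
end
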